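/- For every integer k ≥ 3, the binary form p_{2k−1}(x,y) = C(2k−1,k) x^{k−1} y^{k−1} (x − y) of degree 2k−1 satisfies L_ℝ(p_{2k−1}) = 2k − 1. -/

import Mathlib

/-!
Dehomogenising at `y = 1`, a decomposition `p_{2k-1} = ∑ λ_j (α_j x + β_j y)^{2k-1}` is a
quadrature rule: the nodes `α_j / β_j` with weights `λ_j β_j^{2k-1}` reproduce the functional
`L P = P_k - P_{k-1}` on polynomials of degree `≤ 2k-1` (of degree `≤ 2k-2` if some `β_j = 0`).

For the upper bound take the nodes `1, …, 2k-2` and one more node `b` for which `L` kills the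
nodal polynomial; the coefficients of `∏ (X - i)` alternate in sign, which forces `b < 0`.
Lagrange interpolation then supplies the weights.

For the lower bound, if `M` moments are reproduced by fewer than `M` distinct nodes with nodal
polynomial `W`, then `L` vanishes on `X^i W` for small `i`, so `(X - 1) W` has two consecutive
vanishing coefficients below its degree. This is impossible for a polynomial with only real roots
and at most a simple root at `0`: the class is stable under differentiation, and a real-rooted
`p` with `p₀ ≠ 0` satisfies Newton's inequality `2 p₀ p₂ < p₁²`.
-/

open MvPolynomial

/-- The real rank (length) of a real binary form `f` of degree `d`. -/
noncomputable def LrankR (d : ℕ) (f : MvPolynomial (Fin 2) ℝ) : ℕ∞ :=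
  sInf { n : ℕ∞ | ∃ r : ℕ, n = (r : ℕ∞) ∧ ∃ lam al be : Fin r → ℝ,
    f = ∑ j, MvPolynomial.C (lam j) *
      (MvPolynomial.C (al j) * X 0 + MvPolynomial.C (be j) * X 1) ^ d }

theorem Multiset.esymm_pos {R : Type*} [CommSemiring R] [PartialOrder R] [IsStrictOrderedRing R]
    {s : Multiset R} (hs : ∀ a ∈ s, 0 < a) {n : ℕ} (hn : n ≤ card s) : 0 < s.esymm n := by
  obtain ⟨x, hx⟩ := card_pos_iff_exists_mem.mp <| (card_powersetCard n s).symm ▸ Nat.choose_pos hn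
  have hxs := (mem_powersetCard.mp hx).1
  exact (prod_pos fun a ha => hs a (mem_of_le hxs ha)).trans_le <|
    single_le_sum (fun y hy => by
      obtain ⟨z, hz, rfl⟩ := mem_map.mp hy
      exact (prod_pos fun a ha => hs a (mem_of_le (mem_powersetCard.mp hz).1 ha)).le)
      _ (mem_map_of_mem _ hx)

namespace Polynomial

theorem neg_one_pow_mul_coeff_prod_X_sub_C_pos {s : Multiset ℝ} (hs : ∀ a ∈ s, 0 < a) {j : ℕ}
    (hj : j ≤ Multiset.card s) :
    0 < (-1) ^ (Multiset.card s - j) * (s.map fun a => X - C a).prod.coeff j := by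
  rw [Multiset.prod_X_sub_C_coeff s hj, ← mul_assoc, ← pow_add, Even.neg_one_pow ⟨_, rfl⟩,
    one_mul]
  exact Multiset.esymm_pos hs (Nat.sub_le _ _)

theorem sq_coeff_one_sub_two_mul_coeff_prod_X_sub_C {K : Type*} [Field K] (s : Multiset K)
    (hs : (0 : K) ∉ s) :
    let Q := (s.map fun a => X - C a).prod
    Q.coeff 1 ^ 2 - 2 * Q.coeff 0 * Q.coeff 2 = (s.map fun a => a⁻¹ ^ 2).sum * Q.coeff 0 ^ 2 := by
  induction s using Multiset.induction_on with
  | empty => simp [coeff_one]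
  | cons a t ih =>
    have ha : a ≠ 0 := by rintro rfl; exact hs (Multiset.mem_cons_self _ _)
    have ih := ih fun h => hs (Multiset.mem_cons_of_mem h)
    simp only [Multiset.map_cons, Multiset.prod_cons, Multiset.sum_cons] at ih ⊢
    rw [mul_comm (X - C a)]
    simp only [coeff_mul_X_sub_C, mul_coeff_zero, coeff_sub, coeff_X_zero, coeff_C_zero]
    set Q := (t.map fun a => X - C a).prod
    linear_combination a ^ 2 * ih - Q.coeff 0 ^ 2 * (a⁻¹ * a + 1) * inv_mul_cancel₀ ha

theorem two_mul_coeff_zero_mul_coeff_two_lt_sq {p : ℝ[X]}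
    (hroots : Multiset.card p.roots = p.natDegree) (hdeg : 0 < p.natDegree) (h0 : p.coeff 0 ≠ 0) :
    2 * p.coeff 0 * p.coeff 2 < p.coeff 1 ^ 2 := by
  have h0roots : (0 : ℝ) ∉ p.roots := fun h =>
    h0 (by simpa [coeff_zero_eq_eval_zero] using isRoot_of_mem_roots h)
  obtain ⟨a, ha⟩ := Multiset.card_pos_iff_exists_mem.mp (hroots ▸ hdeg)
  have ha0 : a ≠ 0 := by rintro rfl; exact h0roots ha
  have hS : 0 < (p.roots.map fun a => a⁻¹ ^ 2).sum :=
    (by positivity : 0 < a⁻¹ ^ 2).trans_le <|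
      Multiset.single_le_sum (fun x hx => by
        obtain ⟨b, -, rfl⟩ := Multiset.mem_map.mp hx; positivity) _ (Multiset.mem_map_of_mem _ ha)
  have hid : p.coeff 1 ^ 2 - 2 * p.coeff 0 * p.coeff 2
      = (p.roots.map fun a => a⁻¹ ^ 2).sum * p.coeff 0 ^ 2 := by
    have hp := C_leadingCoeff_mul_prod_multiset_X_sub_C hroots
    have hcoeff (n : ℕ) :
        p.coeff n = p.leadingCoeff * (p.roots.map fun a => X - C a).prod.coeff n := by
      conv_lhs => rw [← hp]
      exact coeff_C_mul _
    rw [hcoeff 0, hcoeff 1, hcoeff 2]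
    linear_combination p.leadingCoeff ^ 2 * sq_coeff_one_sub_two_mul_coeff_prod_X_sub_C _ h0roots
  nlinarith [mul_pos hS (pow_pos (abs_pos.mpr h0) 2), sq_abs (p.coeff 0)]

theorem card_roots_derivative_eq_natDegree {p : ℝ[X]}
    (hroots : Multiset.card p.roots = p.natDegree) :
    Multiset.card (derivative p).roots = (derivative p).natDegree := by
  have := card_roots_le_derivative p
  have := card_roots' (derivative p)
  rw [natDegree_derivative] at *
  omega

theorem coeff_ne_zero_or_coeff_succ_ne_zero {p : ℝ[X]}
    (hroots : Multiset.card p.roots = p.natDegree) (h01 : p.coeff 0 ≠ 0 ∨ p.coeff 1 ≠ 0)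
    {j : ℕ} (hj : j < p.natDegree) : p.coeff j ≠ 0 ∨ p.coeff (j + 1) ≠ 0 := by
  induction j generalizing p with
  | zero => exact h01
  | succ j ih =>
    have h01' : (derivative p).coeff 0 ≠ 0 ∨ (derivative p).coeff 1 ≠ 0 := by
      simp only [coeff_derivative]
      by_contra! h
      norm_num at h
      rcases h01 with h0 | h1
      · have := two_mul_coeff_zero_mul_coeff_two_lt_sq hroots (by omega) h0
        simp [h.1, h.2] at this
      · exact h1 h.1
    have := ih (card_roots_derivative_eq_natDegree hroots) h01'
      (by rw [natDegree_derivative]; omega)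
    simp only [coeff_derivative] at this
    exact this.imp left_ne_zero_of_mul left_ne_zero_of_mul

theorem prod_X_sub_C_coeff_zero_ne_zero_or_coeff_one_ne_zero {K : Type*} [Field K] [DecidableEq K]
    {s : Multiset K} (hs : s.count 0 ≤ 1) :
    (s.map fun a => X - C a).prod.coeff 0 ≠ 0 ∨ (s.map fun a => X - C a).prod.coeff 1 ≠ 0 := by
  set Q := (s.map fun a => X - C a).prod
  have hQ : Q ≠ 0 := (monic_multiset_prod_of_monic _ _ fun a _ => monic_X_sub_C a).ne_zero
  by_contra! h
  have hX2 : (X - C 0) ^ 2 ∣ Q := by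
    rw [C_0, sub_zero, X_pow_dvd_iff]
    intro d hd
    interval_cases d <;> simp [h]
  have := (le_rootMultiplicity_iff hQ).mpr hX2
  rw [← count_roots, roots_multiset_prod_X_sub_C] at this
  omega

theorem sum_mul_eval_eq_of_forall_pow {ι K : Type*} [CommRing K] (s : Finset ι) (t c : ι → K)
    (φ : K[X] →ₗ[K] K) {M : ℕ} (hmom : ∀ m ≤ M, ∑ i ∈ s, c i * t i ^ m = φ (X ^ m))
    {P : K[X]} (hP : P.natDegree ≤ M) : ∑ i ∈ s, c i * P.eval (t i) = φ P := by
  have hPM : P.natDegree < M + 1 := by omega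
  calc ∑ i ∈ s, c i * P.eval (t i)
      = ∑ m ∈ Finset.range (M + 1), P.coeff m * ∑ i ∈ s, c i * t i ^ m := by
        simp only [eval_eq_sum_range' hPM, Finset.mul_sum]
        rw [Finset.sum_comm]
        exact Finset.sum_congr rfl fun _ _ => Finset.sum_congr rfl fun _ _ => by ring
    _ = ∑ m ∈ Finset.range (M + 1), P.coeff m * φ (X ^ m) :=
        Finset.sum_congr rfl fun m hm => by rw [hmom m (by simp at hm; omega)]
    _ = φ P := by
        conv_rhs => rw [as_sum_range' P (M + 1) hPM]
        simp only [map_sum, ← C_mul_X_pow_eq_monomial, ← smul_eq_C_mul, map_smul, smul_eq_mul]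

theorem sum_basis_mul_eval_eq {ι F : Type*} [Field F] [DecidableEq ι] {s : Finset ι}
    {v : ι → F} (hv : Set.InjOn v s) (φ : F[X] →ₗ[F] F) (hφ : φ (Lagrange.nodal s v) = 0)
    {P : F[X]} (hP : P.natDegree ≤ s.card) :
    ∑ i ∈ s, φ (Lagrange.basis s v i) * P.eval (v i) = φ P := by
  set W := Lagrange.nodal s v
  have hW : W.Monic := Lagrange.nodal_monic
  have hsplit : P %ₘ W + W * C ((P /ₘ W).coeff 0) = P := by
    rw [← eq_C_of_natDegree_eq_zero
      (by rw [natDegree_divByMonic _ hW, Lagrange.natDegree_nodal]; omega)]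
    exact modByMonic_add_div P W
  have hφP : φ P = φ (P %ₘ W) := by
    conv_lhs => rw [← hsplit]
    rw [map_add, mul_comm, ← smul_eq_C_mul, map_smul, hφ, smul_zero, add_zero]
  have heval : ∀ i ∈ s, P.eval (v i) = (P %ₘ W).eval (v i) := fun i hi => by
    conv_lhs => rw [← hsplit]
    simp [W, Lagrange.eval_nodal_at_node hi]
  have hdeg : (P %ₘ W).degree < s.card := by
    simpa [W, Lagrange.degree_nodal] using degree_modByMonic_lt P hW
  rw [hφP, Lagrange.eq_interpolate hv hdeg, Lagrange.interpolate_apply, map_sum]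
  refine Finset.sum_congr rfl fun i hi => ?_
  rw [← smul_eq_C_mul, map_smul, smul_eq_mul, heval i hi, mul_comm]

/-- `pOddFunctional k (X ^ m)` is the coefficient of `x ^ m` in
`p_{2k-1}(x, 1) / C(2k-1, k) = x ^ k - x ^ (k - 1)`. -/
noncomputable def pOddFunctional (k : ℕ) : ℝ[X] →ₗ[ℝ] ℝ :=
  lcoeff ℝ k - lcoeff ℝ (k - 1)

theorem pOddFunctional_apply (k : ℕ) (P : ℝ[X]) :
    pOddFunctional k P = P.coeff k - P.coeff (k - 1) := rfl

theorem exists_neg_pOddFunctional_eq_zero {s : Multiset ℝ} (hs : ∀ a ∈ s, 0 < a) {k : ℕ}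
    (hk : 2 ≤ k) (hks : k ≤ Multiset.card s) :
    ∃ b < 0, pOddFunctional k ((X - C b) * (s.map fun a => X - C a).prod) = 0 := by
  obtain ⟨j, rfl⟩ : ∃ j, k = j + 2 := ⟨k - 2, by omega⟩
  set Q := (s.map fun a => X - C a).prod
  set ε : ℝ := (-1) ^ (Multiset.card s - (j + 2))
  have h2 := neg_one_pow_mul_coeff_prod_X_sub_C_pos hs hks
  have h1 := neg_one_pow_mul_coeff_prod_X_sub_C_pos hs (j := j + 1) (by omega)
  have h0 := neg_one_pow_mul_coeff_prod_X_sub_C_pos hs (j := j) (by omega)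
  rw [show Multiset.card s - (j + 1) = Multiset.card s - (j + 2) + 1 by omega, pow_succ] at h1
  rw [show Multiset.card s - j = Multiset.card s - (j + 2) + 2 by omega, pow_add] at h0
  have hQ : 0 < ε * pOddFunctional (j + 2) Q := by
    rw [pOddFunctional_apply]; norm_num at h0 h1 h2 ⊢; nlinarith
  have hXQ : ε * pOddFunctional (j + 2) (X * Q) < 0 := by
    rw [pOddFunctional_apply]; norm_num [coeff_X_mul] at h0 h1 h2 ⊢; nlinarith
  refine ⟨pOddFunctional (j + 2) (X * Q) / pOddFunctional (j + 2) Q, ?_, ?_⟩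
  · rw [← mul_div_mul_left _ _ (pow_ne_zero _ (neg_ne_zero.mpr one_ne_zero) : ε ≠ 0)]
    exact div_neg_of_neg_of_pos hXQ hQ
  · have : pOddFunctional (j + 2) Q ≠ 0 := fun h => by simp [h] at hQ
    rw [sub_mul, map_sub, ← smul_eq_C_mul, map_smul, smul_eq_mul,
      div_mul_cancel₀ _ this, sub_self]

theorem exists_pOddFunctional_quadrature {k : ℕ} (hk : 2 ≤ k) :
    ∃ t lam : Fin (2 * k - 1) → ℝ, ∀ m ≤ 2 * k - 1,
      ∑ j, lam j * t j ^ m = pOddFunctional k (X ^ m) := by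
  classical
  obtain ⟨N, hN⟩ : ∃ N, 2 * k - 1 = N + 1 := ⟨2 * k - 2, by omega⟩
  rw [hN]
  set u : Fin N → ℝ := fun i => (i : ℝ) + 1
  have hu : ∀ a ∈ Finset.univ.val.map u, 0 < a := by
    simp only [Multiset.mem_map]
    rintro _ ⟨i, -, rfl⟩
    positivity
  obtain ⟨b, hb, hφ⟩ := exists_neg_pOddFunctional_eq_zero hu hk (by simp; omega)
  set t : Fin (N + 1) → ℝ := Fin.cons b u
  have ht : Function.Injective t := by
    refine Fin.cons_injective_iff.mpr ⟨?_, fun i j hij => ?_⟩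
    · rintro ⟨i, hi⟩
      have : (0 : ℝ) < u i := by positivity
      linarith
    · simpa [u, Fin.val_inj] using hij
  have hnodal : Lagrange.nodal Finset.univ t
      = (X - C b) * ((Finset.univ.val.map u).map fun a => X - C a).prod := by
    rw [Lagrange.nodal_eq, Fin.prod_univ_succ, Multiset.map_map, ← Finset.prod_eq_multiset_prod]
    rfl
  refine ⟨t, fun j => pOddFunctional k (Lagrange.basis Finset.univ t j), fun m hm => ?_⟩
  simpa using sum_basis_mul_eval_eq ht.injOn (pOddFunctional k) (hnodal ▸ hφ)
    (P := X ^ m) (by simpa using hm)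

theorem _root_.Finset.exists_sum_image_mul_pow_eq {ι K : Type*} [CommSemiring K] [DecidableEq K]
    (J : Finset ι) (t c : ι → K) :
    ∃ w : K → K, ∀ m : ℕ, ∑ x ∈ J.image t, w x * x ^ m = ∑ j ∈ J, c j * t j ^ m := by
  refine ⟨fun x => ∑ j ∈ J with t j = x, c j, fun m => ?_⟩
  rw [← Finset.sum_fiberwise_of_maps_to fun j hj => Finset.mem_image_of_mem t hj]
  refine Finset.sum_congr rfl fun x _ => ?_
  rw [Finset.sum_mul]
  exact Finset.sum_congr rfl fun j hj => by rw [(Finset.mem_filter.mp hj).2]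

theorem le_card_of_pOddFunctional_quadrature {ι : Type*} (J : Finset ι) (t c : ι → ℝ)
    {k M : ℕ} (hk : 1 ≤ k) (hkM : k + 1 ≤ M)
    (hmom : ∀ m ≤ M, ∑ j ∈ J, c j * t j ^ m = pOddFunctional k (X ^ m)) : M ≤ J.card := by
  classical
  obtain ⟨w, hw⟩ := J.exists_sum_image_mul_pow_eq t c
  set T := J.image t
  refine le_trans ?_ (Finset.card_image_le : T.card ≤ J.card)
  by_contra! hT
  set n := T.card
  set W := Lagrange.nodal T id
  set V := W * (X - C 1)
  have hφ (P : ℝ[X]) : pOddFunctional k P = -(P * (X - C 1)).coeff k := by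
    obtain ⟨j, rfl⟩ : ∃ j, k = j + 1 := ⟨k - 1, by omega⟩
    rw [pOddFunctional_apply, coeff_mul_X_sub_C, Nat.add_sub_cancel]; ring
  have hV (i : ℕ) (hik : i ≤ k) (hiM : i + n ≤ M) : V.coeff (k - i) = 0 := by
    have hdeg : (X ^ i * W).natDegree ≤ M :=
      natDegree_mul_le.trans (by rw [natDegree_X_pow, Lagrange.natDegree_nodal]; omega)
    have h := sum_mul_eval_eq_of_forall_pow T id w _ (fun m hm => (hw m).trans (hmom m hm)) hdeg
    have h0 : ∑ x ∈ T, w x * (X ^ i * W).eval (id x) = 0 := Finset.sum_eq_zero fun x hx => by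
      rw [eval_mul, Lagrange.eval_nodal_at_node hx, mul_zero, mul_zero]
    rw [h0, hφ, mul_assoc, coeff_X_pow_mul', if_pos hik, zero_eq_neg] at h
    exact h
  have hVprod : V = ((1 ::ₘ T.val).map fun a => X - C a).prod := by
    rw [Multiset.map_cons, Multiset.prod_cons, mul_comm, ← Finset.prod_eq_multiset_prod,
      ← Lagrange.nodal_eq]
    rfl
  have hroots : Multiset.card V.roots = V.natDegree := by
    rw [hVprod, roots_multiset_prod_X_sub_C, natDegree_multiset_prod_X_sub_C_eq_card]
  have hdegV : V.natDegree = n + 1 := by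
    rw [hVprod, natDegree_multiset_prod_X_sub_C_eq_card, Multiset.card_cons]; rfl
  have h01 := hVprod ▸ prod_X_sub_C_coeff_zero_ne_zero_or_coeff_one_ne_zero (s := 1 ::ₘ T.val)
    (by simpa using Multiset.nodup_iff_count_le_one.mp T.nodup 0)
  set i := min k (M - n)
  rcases coeff_ne_zero_or_coeff_succ_ne_zero hroots h01 (j := k - i) (by omega) with h | h
  · exact h (hV i (by omega) (by omega))
  · exact h (by rw [show k - i + 1 = k - (i - 1) by omega]; exact hV (i - 1) (by omega) (by omega))

end Polynomial

open Polynomial (pOddFunctional)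

namespace MvPolynomial

theorem sum_C_mul_linear_pow {ι R : Type*} [Fintype ι] [CommSemiring R] (d : ℕ)
    (lam al be : ι → R) :
    ∑ j, C (lam j) * (C (al j) * X 0 + C (be j) * X 1 : MvPolynomial (Fin 2) R) ^ d =
      ∑ m ∈ Finset.range (d + 1),
        C (d.choose m * ∑ j, lam j * al j ^ m * be j ^ (d - m)) * X 0 ^ m * X 1 ^ (d - m) := by
  simp_rw [add_pow, Finset.mul_sum]
  rw [Finset.sum_comm]
  refine Finset.sum_congr rfl fun m _ => ?_
  simp only [map_mul, map_sum, map_natCast, Finset.sum_mul]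
  refine Finset.sum_congr rfl fun j _ => ?_
  simp only [mul_pow, map_pow]
  ring

theorem eq_of_sum_C_mul_X_pow_mul_X_pow_eq {R : Type*} [CommSemiring R] {d : ℕ} {a b : ℕ → R}
    (h : ∑ m ∈ Finset.range (d + 1), C (a m) * X 0 ^ m * X 1 ^ (d - m) =
      ∑ m ∈ Finset.range (d + 1), (C (b m) * X 0 ^ m * X 1 ^ (d - m) : MvPolynomial (Fin 2) R))
    {m : ℕ} (hm : m ≤ d) : a m = b m := by
  have := congrArg (fun p => (aeval ![(Polynomial.X : Polynomial R), 1] p).coeff m) h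
  simpa [Polynomial.finsetSum_coeff, Polynomial.coeff_C_mul_X_pow, Nat.lt_succ_iff.mpr hm]
    using this

end MvPolynomial

noncomputable def pOdd (k : ℕ) : MvPolynomial (Fin 2) ℝ :=
  C (((2 * k - 1).choose k : ℕ) : ℝ) * X 0 ^ (k - 1) * X 1 ^ (k - 1) * (X 0 - X 1)

theorem pOdd_eq_sum {k : ℕ} (hk : 1 ≤ k) :
    pOdd k = ∑ m ∈ Finset.range (2 * k - 1 + 1),
      C ((2 * k - 1).choose m * pOddFunctional k (Polynomial.X ^ m)) * X 0 ^ m *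
        X 1 ^ (2 * k - 1 - m) := by
  obtain ⟨j, rfl⟩ : ∃ j, k = j + 1 := ⟨k - 1, by omega⟩
  have hd : 2 * (j + 1) - 1 = 2 * j + 1 := by omega
  simp only [hd, Polynomial.pOddFunctional_apply, Polynomial.coeff_X_pow, Nat.add_sub_cancel]
  simp only [mul_sub, mul_ite, mul_one, mul_zero, map_sub, sub_mul, Finset.sum_sub_distrib,
    apply_ite C, map_zero, ite_mul, zero_mul, Finset.sum_ite_eq, Finset.mem_range]
  rw [if_pos (by omega), if_pos (by omega), pOdd, hd, Nat.choose_symm_half, Nat.add_sub_cancel,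
    show 2 * j + 1 - (j + 1) = j by omega, show 2 * j + 1 - j = j + 1 by omega]
  ring

theorem pOdd_eq_sum_iff {k r : ℕ} (hk : 1 ≤ k) (lam al be : Fin r → ℝ) :
    pOdd k = ∑ j, C (lam j) * (C (al j) * X 0 + C (be j) * X 1) ^ (2 * k - 1) ↔
      ∀ m ≤ 2 * k - 1, ∑ j, lam j * al j ^ m * be j ^ (2 * k - 1 - m) =
        pOddFunctional k (Polynomial.X ^ m) := by
  rw [pOdd_eq_sum hk, sum_C_mul_linear_pow]
  refine ⟨fun h m hm => ?_, fun h => Finset.sum_congr rfl fun m hm => ?_⟩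
  · have := eq_of_sum_C_mul_X_pow_mul_X_pow_eq h hm
    exact (mul_left_cancel₀ (Nat.cast_ne_zero.mpr (Nat.choose_pos hm).ne') this).symm
  · rw [h m (by simpa [Nat.lt_succ_iff] using hm)]

theorem exists_pOdd_eq_sum {k : ℕ} (hk : 2 ≤ k) :
    ∃ lam al be : Fin (2 * k - 1) → ℝ,
      pOdd k = ∑ j, C (lam j) * (C (al j) * X 0 + C (be j) * X 1) ^ (2 * k - 1) := by
  obtain ⟨t, lam, h⟩ := Polynomial.exists_pOddFunctional_quadrature hk
  exact ⟨lam, t, 1, (pOdd_eq_sum_iff (by omega) _ _ _).mpr (by simpa using h)⟩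

theorem le_of_pOdd_eq_sum {k r : ℕ} (hk : 3 ≤ k) (lam al be : Fin r → ℝ)
    (h : pOdd k = ∑ j, C (lam j) * (C (al j) * X 0 + C (be j) * X 1) ^ (2 * k - 1)) :
    2 * k - 1 ≤ r := by
  classical
  have hmom := (pOdd_eq_sum_iff (by omega) lam al be).mp h
  set d := 2 * k - 1
  set J := Finset.univ.filter fun j => be j ≠ 0
  set t : Fin r → ℝ := fun j => al j / be j
  set c : Fin r → ℝ := fun j => lam j * be j ^ d
  -- Nodes with `β_j = 0` only contribute to the top moment `m = d`.
  have hJ (m : ℕ) (hm : m ≤ d) (hmJ : m < d ∨ J = Finset.univ) :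
      ∑ j ∈ J, c j * t j ^ m = pOddFunctional k (Polynomial.X ^ m) := by
    rw [← hmom m hm, ← Finset.sum_filter_add_sum_filter_not Finset.univ fun j => be j ≠ 0]
    have hzero : ∑ j ∈ Finset.univ.filter (fun j => ¬be j ≠ 0),
        lam j * al j ^ m * be j ^ (d - m) = 0 := by
      refine Finset.sum_eq_zero fun j hj => ?_
      have hbe : be j = 0 := by simpa using hj
      rcases hmJ with hmd | hJu
      · rw [hbe, zero_pow (by omega), mul_zero]
      · exact absurd (hJu ▸ Finset.mem_univ j) (by simp [J, hbe])
    rw [hzero, add_zero]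
    refine Finset.sum_congr rfl fun j hj => ?_
    have hbe : be j ≠ 0 := (Finset.mem_filter.mp hj).2
    have hd : be j ^ d = be j ^ m * be j ^ (d - m) := by rw [← pow_add, Nat.add_sub_cancel' hm]
    simp only [c, t, div_pow, hd]
    field_simp
  by_cases hJu : J = Finset.univ
  · simpa [hJu] using Polynomial.le_card_of_pOddFunctional_quadrature J t c (M := d)
      (by omega) (by omega) fun m hm => hJ m hm (Or.inr hJu)
  · have := Polynomial.le_card_of_pOddFunctional_quadrature J t c (M := d - 1)
      (by omega) (by omega) fun m hm => hJ m (by omega) (Or.inl (by omega))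
    have hJr : J.card < r := by
      simpa using Finset.card_lt_card (Finset.ssubset_univ_iff.mpr hJu)
    omega

theorem LrankR_eq_of_forall {d n : ℕ} {f : MvPolynomial (Fin 2) ℝ}
    (hrep : ∃ lam al be : Fin n → ℝ, f = ∑ j, C (lam j) * (C (al j) * X 0 + C (be j) * X 1) ^ d)
    (hmin : ∀ (r : ℕ) (lam al be : Fin r → ℝ),
      f = ∑ j, C (lam j) * (C (al j) * X 0 + C (be j) * X 1) ^ d → n ≤ r) :
    LrankR d f = n :=
  le_antisymm (sInf_le ⟨n, rfl, hrep⟩) <| le_sInf <| by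
    rintro _ ⟨r, rfl, lam, al, be, h⟩
    exact_mod_cast hmin r lam al be h

/-- For `k ≥ 3`, the form `p_{2k−1} = C(2k−1,k) x^{k−1} y^{k−1} (x − y)` has
real rank `2k − 1`. -/
theorem realRank_p_odd (k : ℕ) (hk : 3 ≤ k) :
    LrankR (2 * k - 1)
      (MvPolynomial.C (((2 * k - 1).choose k : ℕ) : ℝ) *
        X 0 ^ (k - 1) * X 1 ^ (k - 1) * (X 0 - X 1)) = ((2 * k - 1 : ℕ) : ℕ∞) :=
  LrankR_eq_of_forall (exists_pOdd_eq_sum (by omega)) fun _ lam al be h =>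
    le_of_pOdd_eq_sum hk lam al be h
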